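/- Let G be a finite graph with edge set numbered 1,…,n, and for α ∈ {0,1}^n let G_α be the spanning subgraph with edges {e_i : α_i = 1}, r_α the number of 1's in α, and k_α the number of connected components of G_α. Then the chromatic polynomial of G satisfies P(G)(λ) = Σ_{α ∈ {0,1}^n} (-1)^{r_α} λ^{k_α}. -/
import Mathlib


open Polynomial

noncomputable section

variable {V : Type} [Fintype V] {n : ℕ}

/-- The number of `1`s in `α ∈ {0,1}^n`. -/
def rOf (α : Fin n → Bool) : ℕ := (Finset.univ.filter fun e => α e = true).card

/-- The number of connected components of the spanning subgraph `G_α` of the graph with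
vertex set `V` and edges `ends : Fin n → V × V`, keeping only the edges `e` with
`α e = 1`: vertices are identified along the kept edges. -/
def kOf (ends : Fin n → V × V) (α : Fin n → Bool) : ℕ :=
  Nat.card (Quotient (Relation.EqvGen.setoid fun u v : V =>
    ∃ e : Fin n, α e = true ∧ (ends e = (u, v) ∨ ends e = (v, u))))

lemma card_compat (ends : Fin n → V × V) (α : Fin n → Bool) (m : ℕ) :
    Nat.card {c : V → Fin m // ∀ e : Fin n, α e = true → c (ends e).1 = c (ends e).2}
      = m ^ (kOf ends α) := by
  set r := fun u v : V => ∃ e : Fin n, α e = true ∧ (ends e = (u, v) ∨ ends e = (v, u)) with hr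
  set s := Relation.EqvGen.setoid r with hs
  have compat : ∀ (c : {c : V → Fin m // ∀ e : Fin n, α e = true → c (ends e).1 = c (ends e).2})
      (u v : V), Relation.EqvGen r u v → c.1 u = c.1 v := by
    intro c u v h
    induction h with
    | rel u v h =>
        obtain ⟨e, he, h | h⟩ := h
        · have := c.2 e he; rw [h] at this; exact this
        · have := c.2 e he; rw [h] at this; exact this.symm
    | refl => rfl
    | symm _ _ _ ih => exact ih.symm
    | trans _ _ _ _ _ ih1 ih2 => exact ih1.trans ih2
  have equiv : {c : V → Fin m // ∀ e : Fin n, α e = true → c (ends e).1 = c (ends e).2}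
      ≃ (Quotient s → Fin m) :=
    { toFun := fun c => Quotient.lift c.1 (fun u v h => compat c u v h)
      invFun := fun f => ⟨fun v => f (Quotient.mk s v), by
        intro e he
        refine congrArg f (Quotient.sound ?_)
        exact Relation.EqvGen.rel _ _ ⟨e, he, Or.inl rfl⟩⟩
      left_inv := fun c => by ext v; rfl
      right_inv := fun f => by
        funext q
        induction q using Quotient.ind
        rfl }
  rw [Nat.card_congr equiv, Nat.card_fun, Nat.card_eq_fintype_card (α := Fin m),
    Fintype.card_fin]
  rfl

lemma key (ends : Fin n → V × V) (m : ℕ) :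
    (Nat.card {c : V → Fin m // ∀ e : Fin n, c (ends e).1 ≠ c (ends e).2} : ℤ)
      = ∑ α : Fin n → Bool, (-1 : ℤ) ^ (rOf α) * (m : ℤ) ^ (kOf ends α) := by
  classical
  have step1 : ∀ α : Fin n → Bool, ((m : ℤ)) ^ (kOf ends α)
      = ∑ c : V → Fin m, if (∀ e : Fin n, α e = true → c (ends e).1 = c (ends e).2)
          then (1 : ℤ) else 0 := by
    intro α
    rw [Finset.sum_boole]
    have : (Finset.univ.filter fun c : V → Fin m =>
        ∀ e : Fin n, α e = true → c (ends e).1 = c (ends e).2).card = m ^ (kOf ends α) := by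
      rw [← Fintype.card_subtype, ← Nat.card_eq_fintype_card]
      exact card_compat ends α m
    rw [this]
    push_cast
    ring
  calc (Nat.card {c : V → Fin m // ∀ e : Fin n, c (ends e).1 ≠ c (ends e).2} : ℤ)
      = ∑ c : V → Fin m, if (∀ e : Fin n, c (ends e).1 ≠ c (ends e).2) then (1:ℤ) else 0 := by
        rw [Finset.sum_boole, Nat.card_eq_fintype_card, Fintype.card_subtype]
    _ = ∑ c : V → Fin m, ∑ α : Fin n → Bool, (-1:ℤ) ^ (rOf α) *
          (if (∀ e : Fin n, α e = true → c (ends e).1 = c (ends e).2) then (1:ℤ) else 0) := by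
        refine Finset.sum_congr rfl fun c _ => ?_
        set B : Finset (Fin n) := Finset.univ.filter (fun e => c (ends e).1 = c (ends e).2)
          with hB
        have hstep : ∑ α : Fin n → Bool, (-1:ℤ) ^ (rOf α) *
            (if (∀ e : Fin n, α e = true → c (ends e).1 = c (ends e).2) then (1:ℤ) else 0)
            = ∑ t : Finset (Fin n), (-1:ℤ) ^ t.card * (if t ⊆ B then (1:ℤ) else 0) := by
          refine Finset.sum_nbij' (i := fun α => Finset.univ.filter (fun e => α e = true))
            (j := fun t => fun e => decide (e ∈ t)) (fun _ _ => Finset.mem_univ _)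
            (fun _ _ => Finset.mem_univ _) ?_ ?_ ?_
          · intro α _; funext e; simp
          · intro t _; ext e; simp
          · intro α _
            have hiff : ((Finset.univ.filter fun e => α e = true) ⊆ B)
                ↔ (∀ e : Fin n, α e = true → c (ends e).1 = c (ends e).2) := by
              simp [hB, Finset.subset_iff]
            by_cases h : ∀ e : Fin n, α e = true → c (ends e).1 = c (ends e).2
            · rw [if_pos h, if_pos (hiff.mpr h)]; rfl
            · rw [if_neg h, if_neg (fun hs => h (hiff.mp hs))]; rfl
        rw [hstep]
        have hfilter : Finset.univ.filter (fun t : Finset (Fin n) => t ⊆ B) = B.powerset := by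
          ext t; simp [Finset.mem_powerset]
        simp only [mul_ite, mul_one, mul_zero]
        rw [← Finset.sum_filter, hfilter, Finset.sum_powerset_neg_one_pow_card]
        by_cases h : ∀ e : Fin n, c (ends e).1 ≠ c (ends e).2
        · rw [if_pos h, if_pos]
          rw [hB, Finset.filter_eq_empty_iff]
          intro e _; exact h e
        · rw [if_neg h, if_neg]
          rw [hB, Finset.filter_eq_empty_iff]
          push_neg at h ⊢
          obtain ⟨e, he⟩ := h
          exact ⟨e, Finset.mem_univ e, he⟩
    _ = ∑ α : Fin n → Bool, (-1:ℤ) ^ (rOf α) * (m:ℤ) ^ (kOf ends α) := by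
        rw [Finset.sum_comm]
        refine Finset.sum_congr rfl fun α _ => ?_
        rw [step1, Finset.mul_sum]

/-- for a finite graph (multigraphs allowed) with `n` edges, any
polynomial `P ∈ ℤ[λ]` whose value at every `m ∈ ℕ` is the number of proper
`m`-colourings (i.e. the chromatic polynomial) satisfies
`P = ∑_{α ∈ {0,1}^n} (-1)^{r_α} λ^{k_α}`. -/
theorem chromatic_state_sum (ends : Fin n → V × V) (P : Polynomial ℤ)
    (hP : ∀ m : ℕ, P.eval (m : ℤ) =
      Nat.card {c : V → Fin m // ∀ e : Fin n, c (ends e).1 ≠ c (ends e).2}) :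
    P = ∑ α : Fin n → Bool, (-1 : Polynomial ℤ) ^ (rOf α) * X ^ (kOf ends α) := by
  apply Polynomial.eq_of_infinite_eval_eq
  apply Set.infinite_of_injective_forall_mem (f := fun m : ℕ => (m : ℤ))
    (hi := Nat.cast_injective)
  intro m
  simp only [Set.mem_setOf_eq]
  rw [hP m, key ends m]
  simp [eval_finset_sum]
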